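/- Let A be a commutative Noetherian ring and let p be a prime ideal of A containing a nonzerodivisor. If p = \overline{IJ} for integrally closed ideals I, J of A each containing a nonzerodivisor, then I = (1) or J = (1). That is, every prime ideal in ic(A) is a *-irreducible element of the monoid ic(A). -/

import Mathlib

/-!
If `p = \overline{IJ}` is prime then `IJ ⊆ p ⊆ I ∩ J`, so one factor, say `I`, equals `p`, and
`p = \overline{pJ}`. An equation of integral dependence of `x ∈ p` over `pJ` gives
`x ^ n ∈ J p ^ n`; as `a ^ m ⊆ J p ^ m` and `b ^ l ⊆ J p ^ l` imply
`(a + b) ^ (m + l) ⊆ J p ^ (m + l)`, this passes from a finite generating set to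
`p ^ N ⊆ J p ^ N`. By the determinant trick some `c ≡ 1 mod J` kills `p ^ N`, which contains
a nonzerodivisor, so `c = 0` and `J = (1)`.
-/

/-- `x` satisfies an equation of integral dependence over the ideal `I`:
`x ^ n + a 1 * x ^ (n-1) + ⋯ + a (n-1) * x + a n = 0` with `a i ∈ I ^ i`. -/
def IsIntegralOverIdeal {A : Type*} [CommRing A] (I : Ideal A) (x : A) : Prop :=
  ∃ n : ℕ, 0 < n ∧ ∃ a : ℕ → A, (∀ i, 1 ≤ i → i ≤ n → a i ∈ I ^ i) ∧
    x ^ n + ∑ i ∈ Finset.Icc 1 n, a i * x ^ (n - i) = 0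

/-- The integral closure `\overline{I}` of an ideal `I`.  The set of elements integral
over `I` is in fact an ideal, so taking the ideal span of this set does not change it. -/
def intCl {A : Type*} [CommRing A] (I : Ideal A) : Ideal A :=
  Ideal.span {x | IsIntegralOverIdeal I x}

section

variable {A : Type*} [CommRing A]

lemma le_intCl (I : Ideal A) : I ≤ intCl I := by
  intro x hx
  refine Ideal.subset_span ⟨1, one_pos, fun _ => -x, ?_, by simp⟩
  intro i h1 h2
  obtain rfl : i = 1 := le_antisymm h2 h1
  simpa using I.neg_mem hx

lemma intCl_mono {I J : Ideal A} (h : I ≤ J) : intCl I ≤ intCl J := by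
  refine Ideal.span_mono ?_
  rintro x ⟨n, hn, a, ha, heq⟩
  exact ⟨n, hn, a, fun i h1 h2 => Ideal.pow_right_mono h i (ha i h1 h2), heq⟩

namespace Ideal

variable {p J K : Ideal A}

lemma exists_pow_mem_mul_pow_of_isIntegralOverIdeal {x : A} (hx : x ∈ p) (hK : K ≤ J * p)
    (hint : IsIntegralOverIdeal K x) : ∃ n, x ^ n ∈ J * p ^ n := by
  obtain ⟨n, -, a, ha, heq⟩ := hint
  refine ⟨n, ?_⟩
  rw [eq_neg_of_add_eq_zero_left heq]
  refine neg_mem (Submodule.sum_mem _ fun i hi => ?_)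
  obtain ⟨h1, h2⟩ := Finset.mem_Icc.mp hi
  have hai : a i ∈ J * p ^ i := by
    have hKi : K ^ i ≤ J * p ^ i := calc
      K ^ i ≤ (J * p) ^ i := pow_right_mono hK i
      _ = J ^ i * p ^ i := mul_pow J p i
      _ ≤ J * p ^ i := mul_mono_left (pow_le_self (by omega))
    exact hKi (ha i h1 h2)
  have hmul := mul_mem_mul hai (pow_mem_pow hx (n - i))
  rwa [mul_assoc, ← pow_add, Nat.add_sub_cancel' h2] at hmul

lemma pow_mul_pow_le_mul_pow {a : Ideal A} {m k : ℕ} (ha : a ≤ p) (ham : a ^ m ≤ J * p ^ m)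
    (hk : m ≤ k) (r : ℕ) : a ^ k * p ^ r ≤ J * p ^ (k + r) := by
  obtain ⟨d, rfl⟩ := Nat.exists_eq_add_of_le hk
  calc a ^ (m + d) * p ^ r = a ^ m * (a ^ d * p ^ r) := by rw [pow_add, mul_assoc]
    _ ≤ J * p ^ m * (p ^ d * p ^ r) := mul_mono ham (mul_mono_left (pow_right_mono ha d))
    _ = J * p ^ (m + d + r) := by rw [mul_assoc, ← pow_add, ← pow_add, add_assoc]

lemma sup_pow_add_le_mul_pow {a b : Ideal A} {m l : ℕ} (ha : a ≤ p) (hb : b ≤ p)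
    (ham : a ^ m ≤ J * p ^ m) (hbl : b ^ l ≤ J * p ^ l) :
    (a ⊔ b) ^ (m + l) ≤ J * p ^ (m + l) := by
  rw [← add_eq_sup, add_pow, sum_eq_sup]
  refine Finset.sup_le fun i hi => mul_le_left.trans ?_
  have hi : i ≤ m + l := Finset.mem_range_succ_iff.mp hi
  by_cases hmi : m ≤ i
  · calc a ^ i * b ^ (m + l - i) ≤ a ^ i * p ^ (m + l - i) :=
          mul_mono_right (pow_right_mono hb _)
      _ ≤ J * p ^ (m + l) := by
        simpa only [Nat.add_sub_cancel' hi] using pow_mul_pow_le_mul_pow ha ham hmi (m + l - i)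
  · calc a ^ i * b ^ (m + l - i) ≤ b ^ (m + l - i) * p ^ i := by
          rw [mul_comm]; exact mul_mono_right (pow_right_mono ha _)
      _ ≤ J * p ^ (m + l) := by
        simpa only [Nat.sub_add_cancel hi] using
          pow_mul_pow_le_mul_pow hb hbl (by omega : l ≤ m + l - i) i

lemma exists_span_pow_le_mul_pow {s : Set A} (hs : s ⊆ p) (hfg : (span s).FG)
    (h : ∀ x ∈ s, ∃ n, x ^ n ∈ J * p ^ n) : ∃ n, span s ^ n ≤ J * p ^ n := by
  classical
  obtain ⟨T, hTs, hspan⟩ := (Submodule.fg_span_iff_fg_span_finset_subset s).mp hfg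
  rw [← submodule_span_eq, hspan, submodule_span_eq]
  clear hspan hfg
  induction T using Finset.induction_on with
  | empty => exact ⟨1, by simp⟩
  | insert x T _ ih =>
    have hTs' : (T : Set A) ⊆ s := fun y hy => hTs (Finset.mem_insert_of_mem hy)
    have hx : x ∈ s := hTs (Finset.mem_insert_self x T)
    obtain ⟨m, hm⟩ := h x hx
    obtain ⟨l, hl⟩ := ih hTs'
    refine ⟨m + l, ?_⟩
    rw [Finset.coe_insert, span_insert]
    refine sup_pow_add_le_mul_pow ?_ ((span_mono hTs').trans (span_le.mpr hs)) ?_ hl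
    · exact span_le.mpr (Set.singleton_subset_iff.mpr (hs hx))
    · rwa [span_singleton_pow, span_le, Set.singleton_subset_iff]

lemma eq_top_of_le_mul_self {N : Ideal A} (hN : N.FG) (h : N ≤ J * N) {r : A} (hr : r ∈ N)
    (hr' : r ∈ nonZeroDivisors A) : J = ⊤ := by
  obtain ⟨c, hc1, hc2⟩ :=
    Submodule.exists_sub_one_mem_and_smul_eq_zero_of_fg_of_le_smul J N hN (by rwa [smul_eq_mul])
  obtain rfl : c = 0 := (mem_nonZeroDivisors_iff_right.mp hr') c (hc2 r hr)
  rw [eq_top_iff_one, ← J.neg_mem_iff]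
  simpa using hc1

lemma eq_top_of_eq_intCl_mul [IsNoetherianRing A] (hpnzd : ∃ r ∈ p, r ∈ nonZeroDivisors A)
    (h : p = intCl (p * J)) : J = ⊤ := by
  obtain ⟨r, hrp, hr⟩ := hpnzd
  set s := {x | IsIntegralOverIdeal (p * J) x}
  have hspan : span s = p := h.symm
  have hs : s ⊆ p := hspan ▸ subset_span
  obtain ⟨n, hn⟩ := exists_span_pow_le_mul_pow hs (hspan ▸ IsNoetherian.noetherian p)
    fun x hx => exists_pow_mem_mul_pow_of_isIntegralOverIdeal (hs hx) (mul_comm p J).le hx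
  rw [hspan] at hn
  exact eq_top_of_le_mul_self (IsNoetherian.noetherian _) hn (pow_mem_pow hrp n) (pow_mem hr n)

end Ideal

end

theorem prime_starIrreducible_general {A : Type*} [CommRing A] [IsNoetherianRing A] (p I J : Ideal A)
    (hp : p.IsPrime) (hpnzd : ∃ r ∈ p, r ∈ nonZeroDivisors A)
    (hIc : intCl I = I)
    (hJc : intCl J = J)
    (h : p = intCl (I * J)) : I = ⊤ ∨ J = ⊤ := by
  have hIJp : I * J ≤ p := h ▸ le_intCl _
  have hpI : p ≤ I := h ▸ (intCl_mono Ideal.mul_le_left).trans hIc.le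
  have hpJ : p ≤ J := h ▸ (intCl_mono Ideal.mul_le_right).trans hJc.le
  rcases hp.mul_le.mp hIJp with hIp | hJp
  · obtain rfl : I = p := le_antisymm hIp hpI
    exact Or.inr (Ideal.eq_top_of_eq_intCl_mul hpnzd h)
  · obtain rfl : J = p := le_antisymm hJp hpJ
    rw [mul_comm] at h
    exact Or.inl (Ideal.eq_top_of_eq_intCl_mul hpnzd h)

/-- Prime ideals in `ic(A)` are `*`-irreducible. -/
theorem prime_starIrreducible {A : Type*} [CommRing A] [IsNoetherianRing A] (p I J : Ideal A)
    (hp : p.IsPrime) (hpnzd : ∃ r ∈ p, r ∈ nonZeroDivisors A)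
    (hIc : intCl I = I) (hInzd : ∃ r ∈ I, r ∈ nonZeroDivisors A)
    (hJc : intCl J = J) (hJnzd : ∃ r ∈ J, r ∈ nonZeroDivisors A)
    (h : p = intCl (I * J)) : I = ⊤ ∨ J = ⊤ :=
  prime_starIrreducible_general p I J hp hpnzd hIc hJc h
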